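/- Convolution-type identity: suppose k is even and k divides n, and write N = n/k. Then for every real x, ∑_{i=0}^{n} (−1)^i · C(n,i) · A_i^{(k)}(m,x) · A_{n−i}^{(k)}(m,x) = ((−1)^n · m^{N} · n! / k^{n}) · ∑_{i=0}^{N} (γ_i / i!) · (γ_{N−i} / (N−i)!); in particular the left-hand side does not depend on x. Here C(n,i) denotes the binomial coefficient. -/
import Mathlib


open Finset

/-- Rising factorial (Pochhammer symbol) `x^(n) = x(x+1)⋯(x+n-1)`. -/
noncomputable def risingFact (x : ℝ) (n : ℕ) : ℝ := (ascPochhammer ℝ n).eval x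

/-- `γ_i = (∏_r a_r^{(i)}) / (∏_s b_s^{(i)})`. -/
noncomputable def ghGamma {p q : ℕ} (a : Fin p → ℝ) (b : Fin q → ℝ) (i : ℕ) : ℝ :=
  (∏ r, risingFact (a r) i) / (∏ s, risingFact (b s) i)

/-- The generalized hypergeometric Appell polynomial `A_n^{(k)}(m,x)` (as a function of `x`). -/
noncomputable def ghAppell {p q : ℕ} (a : Fin p → ℝ) (b : Fin q → ℝ)
    (k : ℕ) (m : ℝ) (n : ℕ) (x : ℝ) : ℝ :=
  ∑ i ∈ Finset.range (n / k + 1),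
    ((n.factorial : ℝ) / (i.factorial * (n - k * i).factorial)) * ghGamma a b i *
      ((-1) ^ (k * i) * m ^ i / (k : ℝ) ^ (k * i)) * x ^ (n - k * i)

/-- Auxiliary coefficient `g_u = γ_u m^u / (k^{ku} u!)`. -/
noncomputable def ghAux {p q : ℕ} (a : Fin p → ℝ) (b : Fin q → ℝ)
    (k : ℕ) (m : ℝ) (u : ℕ) : ℝ :=
  ghGamma a b u * m ^ u / ((k : ℝ) ^ (k * u) * (u.factorial : ℝ))

lemma ghAux_factNe (j : ℕ) : ((j.factorial : ℝ)) ≠ 0 :=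
  Nat.cast_ne_zero.mpr j.factorial_ne_zero

/-- Rewrite `A_i` as a sum over a fixed range `N+1` with indicator terms. -/
lemma ghAppell_eq_aux {p q : ℕ} (a : Fin p → ℝ) (b : Fin q → ℝ)
    (k : ℕ) (hk : 1 ≤ k) (hke : Even k) (m : ℝ) (N n i : ℕ) (hi : i ≤ n) (hn : n = k * N)
    (x : ℝ) :
    ghAppell a b k m i x =
      ∑ u ∈ Finset.range (N + 1),
        (if k * u ≤ i then
          ((i.factorial : ℝ) / ((i - k * u).factorial : ℝ)) * ghAux a b k m u * x ^ (i - k * u)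
         else 0) := by
  have hk0 : 0 < k := hk
  calc ghAppell a b k m i x
      = ∑ u ∈ Finset.range (i / k + 1),
        (if k * u ≤ i then
          ((i.factorial : ℝ) / ((i - k * u).factorial : ℝ)) * ghAux a b k m u * x ^ (i - k * u)
         else 0) := by
        rw [ghAppell]
        refine Finset.sum_congr rfl fun u hu => ?_
        rw [Finset.mem_range, Nat.lt_succ_iff] at hu
        have hku : k * u ≤ i := by
          rw [mul_comm]; exact (Nat.le_div_iff_mul_le hk0).mp hu
        rw [if_pos hku, (hke.mul_right u).neg_one_pow, ghAux]
        ring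
    _ = _ := by
        refine Finset.sum_subset ?_ ?_
        · intro u hu
          rw [Finset.mem_range] at *
          have : i / k ≤ N := by
            have := Nat.div_le_div_right (c := k) hi
            rwa [hn, Nat.mul_div_cancel_left _ hk0] at this
          omega
        · intro u _ hu
          rw [Finset.mem_range, Nat.lt_succ_iff, not_le] at hu
          refine if_neg fun hku => ?_
          have : u ≤ i / k := (Nat.le_div_iff_mul_le hk0).mpr (by rw [mul_comm]; exact hku)
          omega

/-- The inner alternating sum collapses. -/
lemma ghAppell_inner {p q : ℕ} (a : Fin p → ℝ) (b : Fin q → ℝ)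
    (k : ℕ) (hk : 1 ≤ k) (hke : Even k) (m : ℝ) (N n : ℕ) (hn : n = k * N)
    (x : ℝ) (u v : ℕ) :
    (∑ i ∈ Finset.range (n + 1),
      ((-1 : ℝ) ^ i * (n.choose i : ℝ)) *
        (if k * u ≤ i then
          ((i.factorial : ℝ) / ((i - k * u).factorial : ℝ)) * ghAux a b k m u * x ^ (i - k * u)
         else 0) *
        (if k * v ≤ n - i then
          (((n - i).factorial : ℝ) / ((n - i - k * v).factorial : ℝ)) * ghAux a b k m v *
            x ^ (n - i - k * v)
         else 0)) =
    if u + v = N then (n.factorial : ℝ) * (ghAux a b k m u * ghAux a b k m v) else 0 := by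
  by_cases hcase : k * u + k * v ≤ n
  · obtain ⟨M, hM⟩ : ∃ M, n = k * u + k * v + M := ⟨n - (k * u + k * v), by omega⟩
    have hsub : Finset.Ico (k * u) (k * u + M + 1) ⊆ Finset.range (n + 1) := by
      intro i hi
      rw [Finset.mem_Ico] at hi; rw [Finset.mem_range]; omega
    rw [← Finset.sum_subset hsub
        (by
          intro i hi hni
          rw [Finset.mem_range] at hi
          rw [Finset.mem_Ico, not_and_or, not_le, not_lt] at hni
          rcases hni with h | h
          · rw [if_neg (by omega), mul_zero, zero_mul]
          · rw [if_neg (show ¬ k * v ≤ n - i by omega), mul_zero])]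
    rw [Finset.sum_Ico_eq_sum_range, show k * u + M + 1 - k * u = M + 1 by omega]
    have hterm : ∀ j ∈ Finset.range (M + 1),
        ((-1 : ℝ) ^ (k * u + j) * (n.choose (k * u + j) : ℝ)) *
          (if k * u ≤ k * u + j then
            (((k * u + j).factorial : ℝ) / ((k * u + j - k * u).factorial : ℝ)) *
              ghAux a b k m u * x ^ (k * u + j - k * u)
           else 0) *
          (if k * v ≤ n - (k * u + j) then
            (((n - (k * u + j)).factorial : ℝ) / ((n - (k * u + j) - k * v).factorial : ℝ)) *
              ghAux a b k m v * x ^ (n - (k * u + j) - k * v)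
           else 0) =
        (ghAux a b k m u * ghAux a b k m v * x ^ M * ((n.factorial : ℝ) / (M.factorial : ℝ))) *
          ((-1 : ℝ) ^ j * (M.choose j : ℝ)) := by
      intro j hj
      rw [Finset.mem_range, Nat.lt_succ_iff] at hj
      rw [if_pos (Nat.le_add_right _ _), if_pos (show k * v ≤ n - (k * u + j) by omega),
        show k * u + j - k * u = j by omega,
        show n - (k * u + j) - k * v = M - j by omega,
        pow_add, (hke.mul_right u).neg_one_pow, one_mul,
        Nat.cast_choose ℝ (show k * u + j ≤ n by omega),
        Nat.cast_choose ℝ (show j ≤ M by omega),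
        show x ^ M = x ^ j * x ^ (M - j) by rw [← pow_add]; congr 1; omega]
      have h1 := ghAux_factNe j
      have h2 := ghAux_factNe (M - j)
      have h3 := ghAux_factNe (k * u + j)
      have h4 := ghAux_factNe (n - (k * u + j))
      have h5 := ghAux_factNe M
      field_simp
    rw [Finset.sum_congr rfl hterm, ← Finset.mul_sum,
      show (∑ j ∈ Finset.range (M + 1), ((-1 : ℝ) ^ j * (M.choose j : ℝ)))
          = if M = 0 then 1 else 0 by exact_mod_cast Int.alternating_sum_range_choose]
    by_cases hM0 : M = 0
    · have hsum : k * u + k * v = n := by omega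
      have huv : u + v = N := by
        refine Nat.eq_of_mul_eq_mul_left (show 0 < k by omega) ?_
        rw [Nat.mul_add, hsum, hn]
      rw [if_pos hM0, if_pos huv, hM0]
      simp only [pow_zero, Nat.factorial_zero, Nat.cast_one, div_one, mul_one]
      ring
    · have huv : u + v ≠ N := by
        intro h
        apply hM0
        have : k * u + k * v = n := by rw [← Nat.mul_add, h]; exact hn.symm
        omega
      rw [if_neg hM0, if_neg huv, mul_zero]
  · have huv : u + v ≠ N := by
      intro h
      apply hcase
      rw [← Nat.mul_add, h]; omega
    rw [if_neg huv]
    refine Finset.sum_eq_zero fun i hi => ?_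
    rw [Finset.mem_range] at hi
    by_cases h1 : k * u ≤ i
    · rw [if_neg (show ¬ k * v ≤ n - i by omega), mul_zero]
    · rw [if_neg h1, mul_zero, zero_mul]

/-- convolution-type identity for even `k` with `k ∣ n`, `N = n/k`:
`∑_i (−1)^i C(n,i) A_i^{(k)}(m,x) A_{n−i}^{(k)}(m,x)
  = ((−1)^n m^N n!/k^n) ∑_{i=0}^{N} (γ_i/i!)(γ_{N−i}/(N−i)!)`. -/
theorem ghAppell_convolution {p q : ℕ} (a : Fin p → ℝ) (b : Fin q → ℝ)
    (hb : ∀ s : Fin q, ∀ j : ℕ, b s ≠ -(j : ℝ))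
    (k : ℕ) (hk : 1 ≤ k) (hke : Even k) (m : ℝ) (n : ℕ) (hkn : k ∣ n) (x : ℝ) :
    ∑ i ∈ Finset.range (n + 1),
        (-1 : ℝ) ^ i * (n.choose i : ℝ) * ghAppell a b k m i x * ghAppell a b k m (n - i) x =
      ((-1 : ℝ) ^ n * m ^ (n / k) * (n.factorial : ℝ) / (k : ℝ) ^ n) *
        ∑ i ∈ Finset.range (n / k + 1),
          (ghGamma a b i / (i.factorial : ℝ)) *
            (ghGamma a b (n / k - i) / ((n / k - i).factorial : ℝ)) := by
  obtain ⟨N, hn⟩ := hkn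
  have hk0 : 0 < k := hk
  have hNk : n / k = N := by rw [hn, Nat.mul_div_cancel_left _ hk0]
  rw [hNk]
  have hneg : (-1 : ℝ) ^ n = 1 := by
    refine Even.neg_one_pow ?_
    rw [hn]; exact hke.mul_right N
  calc ∑ i ∈ Finset.range (n + 1),
        (-1 : ℝ) ^ i * (n.choose i : ℝ) * ghAppell a b k m i x * ghAppell a b k m (n - i) x
      = ∑ i ∈ Finset.range (n + 1), ∑ u ∈ Finset.range (N + 1), ∑ v ∈ Finset.range (N + 1),
          ((-1 : ℝ) ^ i * (n.choose i : ℝ)) *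
            (if k * u ≤ i then
              ((i.factorial : ℝ) / ((i - k * u).factorial : ℝ)) * ghAux a b k m u *
                x ^ (i - k * u)
             else 0) *
            (if k * v ≤ n - i then
              (((n - i).factorial : ℝ) / ((n - i - k * v).factorial : ℝ)) * ghAux a b k m v *
                x ^ (n - i - k * v)
             else 0) := by
        refine Finset.sum_congr rfl fun i hi => ?_
        rw [Finset.mem_range, Nat.lt_succ_iff] at hi
        rw [ghAppell_eq_aux a b k hk hke m N n i hi hn x,
          ghAppell_eq_aux a b k hk hke m N n (n - i) (by omega) hn x,
          mul_assoc ((-1 : ℝ) ^ i * (n.choose i : ℝ)), Finset.sum_mul_sum,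
          Finset.mul_sum]
        refine Finset.sum_congr rfl fun u hu => ?_
        rw [Finset.mul_sum]
        refine Finset.sum_congr rfl fun v hv => ?_
        ring
    _ = ∑ u ∈ Finset.range (N + 1), ∑ v ∈ Finset.range (N + 1), ∑ i ∈ Finset.range (n + 1),
          ((-1 : ℝ) ^ i * (n.choose i : ℝ)) *
            (if k * u ≤ i then
              ((i.factorial : ℝ) / ((i - k * u).factorial : ℝ)) * ghAux a b k m u *
                x ^ (i - k * u)
             else 0) *
            (if k * v ≤ n - i then
              (((n - i).factorial : ℝ) / ((n - i - k * v).factorial : ℝ)) * ghAux a b k m v *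
                x ^ (n - i - k * v)
             else 0) := by
        rw [Finset.sum_comm]
        exact Finset.sum_congr rfl fun u _ => Finset.sum_comm
    _ = ∑ u ∈ Finset.range (N + 1), ∑ v ∈ Finset.range (N + 1),
          (if u + v = N then (n.factorial : ℝ) * (ghAux a b k m u * ghAux a b k m v) else 0) :=
        Finset.sum_congr rfl fun u _ => Finset.sum_congr rfl fun v _ =>
          ghAppell_inner a b k hk hke m N n hn x u v
    _ = ∑ u ∈ Finset.range (N + 1),
          (n.factorial : ℝ) * (ghAux a b k m u * ghAux a b k m (N - u)) := by
        refine Finset.sum_congr rfl fun u hu => ?_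
        rw [Finset.mem_range, Nat.lt_succ_iff] at hu
        have hcg : ∀ v ∈ Finset.range (N + 1),
            (if u + v = N then (n.factorial : ℝ) * (ghAux a b k m u * ghAux a b k m v) else 0)
              = (if v = N - u then
                  (n.factorial : ℝ) * (ghAux a b k m u * ghAux a b k m v) else 0) :=
          fun v _ => if_congr (by omega) rfl rfl
        rw [Finset.sum_congr rfl hcg,
          Finset.sum_ite_eq' (Finset.range (N + 1)) (N - u)
            (fun v => (n.factorial : ℝ) * (ghAux a b k m u * ghAux a b k m v)),
          if_pos (Finset.mem_range.mpr (by omega))]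
    _ = ((-1 : ℝ) ^ n * m ^ N * (n.factorial : ℝ) / (k : ℝ) ^ n) *
        ∑ i ∈ Finset.range (N + 1),
          (ghGamma a b i / (i.factorial : ℝ)) *
            (ghGamma a b (N - i) / ((N - i).factorial : ℝ)) := by
        rw [hneg, Finset.mul_sum]
        refine Finset.sum_congr rfl fun u hu => ?_
        rw [Finset.mem_range, Nat.lt_succ_iff] at hu
        rw [ghAux, ghAux]
        have hm : m ^ u * m ^ (N - u) = m ^ N := by
          rw [← pow_add, Nat.add_sub_cancel' hu]
        have hkpow : (k : ℝ) ^ (k * u) * (k : ℝ) ^ (k * (N - u)) = (k : ℝ) ^ n := by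
          rw [← pow_add, ← Nat.mul_add, Nat.add_sub_cancel' hu, ← hn]
        have hk0' : (k : ℝ) ≠ 0 := Nat.cast_ne_zero.mpr (by omega)
        have h1 := ghAux_factNe u
        have h2 := ghAux_factNe (N - u)
        rw [← hm, ← hkpow]
        field_simp
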